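/- arXiv:2306.02151 — 3 statements merged into one kernel-verified Lean document; each statement's English description precedes it below -/
import Mathlib

section
/- Let P be a finite set of points in the plane and Q ⊆ P nonempty. The Hausdorff distance between conv(Q) and conv(P) belongs to the canonical set Ξ = 𝒱 ∪ ℒ, where 𝒱 is the set of pairwise distances ‖x−y‖ for x,y ∈ P, and ℒ is the set of values max_{p ∈ P_{a,b}} dist(p, ℓ_{a,b}) over ordered pairs a,b ∈ P with a ≠ b, where ℓ_{a,b} is the line through a and b and P_{a,b} is the subset of P in the closed halfplane to the left of the directed line ℓ_{a,b} (with the max of the empty set taken as 0). -/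
/-!
The function `x ↦ infDist x (conv Q)` is convex, so the Hausdorff distance is attained as
`infDist p (conv Q)` at a point `p ∈ P`; it equals `dist p q` for the point `q ∈ conv Q` nearest
to `p`. If `q ∈ P` this is a pairwise distance. Otherwise `q` is a convex combination of the points
of `Q` on the supporting line of `conv Q` through `q` orthogonal to `p - q`, and as `q ∉ Q` there
are two distinct such points `a`, `b`. Orient the line so that `p` lies to its left. A point `x`
of `P` to the left of it is at distance `⟪p - q, x - q⟫ / ‖p - q‖ ≤ infDist x (conv Q) ≤ dist p q`
from it, so the maximum defining `ℒ` for `(a, b)` is `dist p q`.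
-/

open Metric

/-- `p` lies in the closed halfplane to the left of the line through `a` and `b`,
directed from `a` to `b`. -/
def IsLeftOf (a b p : EuclideanSpace ℝ (Fin 2)) : Prop :=
  0 ≤ (b 0 - a 0) * (p 1 - a 1) - (b 1 - a 1) * (p 0 - a 0)

/-- The set `𝒱` of pairwise distances of points of `P`. -/
def pairwiseDists (P : Finset (EuclideanSpace ℝ (Fin 2))) : Set ℝ :=
  {d | ∃ x ∈ P, ∃ y ∈ P, d = dist x y}

/-- The set `ℒ` of values `max_{p ∈ P_{a,b}} dist(p, ℓ_{a,b})` over ordered pairs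
`a ≠ b` of points of `P`, where `ℓ_{a,b}` is the line through `a` and `b` and `P_{a,b}`
is the subset of `P` in the closed halfplane to the left of the directed line
(the maximum of the empty set being `0`, as `sSup ∅ = 0` in `ℝ`). -/
def lineDists (P : Finset (EuclideanSpace ℝ (Fin 2))) : Set ℝ :=
  {d | ∃ a ∈ P, ∃ b ∈ P, a ≠ b ∧
    d = sSup ((fun p => Metric.infDist p
        (affineSpan ℝ ({a, b} : Set (EuclideanSpace ℝ (Fin 2))) :
          Set (EuclideanSpace ℝ (Fin 2)))) ''
      {p | p ∈ P ∧ IsLeftOf a b p})}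

open scoped InnerProductSpace

theorem exists_ne_of_mem_convexHull_of_notMem {𝕜 E : Type*} [Semiring 𝕜] [PartialOrder 𝕜]
    [AddCommMonoid E] [Module 𝕜 E] {s : Set E} {x : E} (hx : x ∈ convexHull 𝕜 s)
    (hxs : x ∉ s) : ∃ a ∈ s, ∃ b ∈ s, a ≠ b := by
  by_contra! h
  exact hxs ((Set.Subsingleton.convex (𝕜 := 𝕜) h).convexHull_eq ▸ hx)

theorem mem_convexHull_setOf_eq_of_le {𝕜 E : Type*} [Field 𝕜] [LinearOrder 𝕜]
    [IsStrictOrderedRing 𝕜] [AddCommGroup E] [Module 𝕜 E] {s : Set E} {f : E →ₗ[𝕜] 𝕜} {c : 𝕜}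
    {x : E} (hs : ∀ y ∈ s, f y ≤ c) (hx : x ∈ convexHull 𝕜 s) (hfx : f x = c) :
    x ∈ convexHull 𝕜 {y ∈ s | f y = c} := by
  classical
  obtain ⟨ι, _, w, z, hw₀, hw₁, hz, rfl⟩ := mem_convexHull_iff_exists_fintype.1 hx
  have hslack : ∑ i, w i * (c - f (z i)) = 0 := by
    simp [mul_sub, Finset.sum_sub_distrib, ← Finset.sum_mul, hw₁, ← hfx, map_sum]
  have hface : ∀ i, w i ≠ 0 → f (z i) = c := fun i hi => by
    have := (Finset.sum_eq_zero_iff_of_nonneg fun j _ =>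
      mul_nonneg (hw₀ j) (sub_nonneg.2 (hs _ (hz j)))).1 hslack i (Finset.mem_univ i)
    linarith [(mul_eq_zero.1 this).resolve_left hi]
  rw [← Finset.centerMass_eq_of_sum_1 _ _ hw₁, ← Finset.centerMass_filter_ne_zero]
  refine Finset.centerMass_mem_convexHull _ (fun i _ => hw₀ i) ?_
    fun i hi => ⟨hz i, hface i (Finset.mem_filter.1 hi).2⟩
  rw [Finset.sum_filter_ne_zero, hw₁]
  exact one_pos

section Normed

variable {E : Type*} [NormedAddCommGroup E] [NormedSpace ℝ E]

theorem Convex.convexOn_infDist {A : Set E} (hA : Convex ℝ A) :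
    ConvexOn ℝ Set.univ (infDist · A) := by
  refine ⟨convex_univ, fun x _ y _ s t hs ht hst => ?_⟩
  rcases A.eq_empty_or_nonempty with rfl | hne
  · simp
  refine le_of_forall_pos_le_add fun ε hε => ?_
  obtain ⟨a, ha, hxa⟩ := (infDist_lt_iff hne).1 (lt_add_of_pos_right (infDist x A) hε)
  obtain ⟨b, hb, hyb⟩ := (infDist_lt_iff hne).1 (lt_add_of_pos_right (infDist y A) hε)
  calc infDist (s • x + t • y) A ≤ dist (s • x + t • y) (s • a + t • b) :=
        infDist_le_dist_of_mem (hA ha hb hs ht hst)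
    _ = ‖s • (x - a) + t • (y - b)‖ := by rw [dist_eq_norm]; congr 1; module
    _ ≤ s * dist x a + t * dist y b := by
        simpa only [dist_eq_norm, smul_eq_mul] using
          convexOn_univ_norm.2 trivial trivial hs ht hst (x := x - a) (y := y - b)
    _ ≤ s * (infDist x A + ε) + t * (infDist y A + ε) := by gcongr
    _ = s • infDist x A + t • infDist y A + ε := by
        simp only [smul_eq_mul]; linear_combination ε * hst

theorem hausdorffDist_convexHull_eq_infDist {s : Finset E} {A : Set E} {p : E}
    (hA : Convex ℝ A) (hAs : A ⊆ convexHull ℝ s) (hp : p ∈ s)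
    (hmax : ∀ x ∈ s, infDist x A ≤ infDist p A) :
    hausdorffDist A (convexHull ℝ s) = infDist p A := by
  rcases A.eq_empty_or_nonempty with rfl | hne
  · simp
  refine le_antisymm (hausdorffDist_le_of_infDist infDist_nonneg ?_ ?_) ?_
  · exact fun x hx => (infDist_zero_of_mem (hAs hx)).le.trans infDist_nonneg
  · intro x hx
    obtain ⟨y, hy, hxy⟩ := hA.convexOn_infDist.exists_ge_of_mem_convexHull (Set.subset_univ _) hx
    exact hxy.trans (hmax y hy)
  · rw [hausdorffDist_comm]
    refine infDist_le_hausdorffDist_of_mem (subset_convexHull ℝ _ hp) ?_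
    have hbdd := (s.finite_toSet.isCompact_convexHull (𝕜 := ℝ)).isBounded
    exact hausdorffEDist_ne_top_of_nonempty_of_bounded ⟨p, subset_convexHull ℝ _ hp⟩ hne hbdd
      (hbdd.subset hAs)

end Normed

section InnerProductSpace

variable {E : Type*} [NormedAddCommGroup E] [InnerProductSpace ℝ E]

theorem inner_sub_nonpos_of_dist_eq_infDist {K : Set E} {p q y : E} (hK : Convex ℝ K)
    (hq : q ∈ K) (hpq : dist p q = infDist p K) (hy : y ∈ K) : ⟪p - q, y - q⟫_ℝ ≤ 0 := by
  refine (norm_eq_iInf_iff_real_inner_le_zero hK hq).1 ?_ y hy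
  simpa only [dist_eq_norm, infDist_eq_iInf] using hpq

theorem inner_sub_div_norm_le_infDist {A : Set E} {u a : E} (hA : A.Nonempty)
    (hAu : ∀ y ∈ A, ⟪u, y - a⟫_ℝ ≤ 0) (x : E) : ⟪u, x - a⟫_ℝ / ‖u‖ ≤ infDist x A := by
  refine (le_infDist hA).2 fun y hy => div_le_of_le_mul₀ (norm_nonneg _) dist_nonneg ?_
  calc ⟪u, x - a⟫_ℝ ≤ ⟪u, x - y⟫_ℝ := by
        have := hAu y hy
        simp only [inner_sub_right] at this ⊢
        linarith
    _ ≤ ‖u‖ * ‖x - y‖ := real_inner_le_norm u (x - y)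
    _ = dist x y * ‖u‖ := by rw [dist_eq_norm, mul_comm]

theorem exists_ne_of_mem_convexHull_of_inner_sub_nonpos {s : Set E} {u q : E}
    (hq : q ∈ convexHull ℝ s) (hqs : q ∉ s) (hs : ∀ y ∈ s, ⟪u, y - q⟫_ℝ ≤ 0) :
    ∃ a ∈ s, ∃ b ∈ s, a ≠ b ∧ ⟪u, a - q⟫_ℝ = 0 ∧ ⟪u, b - q⟫_ℝ = 0 := by
  have hface := mem_convexHull_setOf_eq_of_le (f := innerₗ E u)
    (fun y hy => by simpa [inner_sub_right] using hs y hy) hq rfl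
  obtain ⟨a, ⟨ha, haq⟩, b, ⟨hb, hbq⟩, hab⟩ :=
    exists_ne_of_mem_convexHull_of_notMem hface fun h => hqs h.1
  exact ⟨a, ha, b, hb, hab, (inner_sub_right u a q).trans (sub_eq_zero.2 haq),
    (inner_sub_right u b q).trans (sub_eq_zero.2 hbq)⟩

theorem infDist_setOf_inner_sub_eq_zero {u : E} (hu : u ≠ 0) (a x : E) :
    infDist x {z | ⟪u, z - a⟫_ℝ = 0} = |⟪u, x - a⟫_ℝ| / ‖u‖ := by
  have hu' : 0 < ‖u‖ := norm_pos_iff.2 hu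
  set z₀ := x - (⟪u, x - a⟫_ℝ / ‖u‖ ^ 2) • u
  have hz₀ : ⟪u, z₀ - a⟫_ℝ = 0 := by
    rw [show z₀ - a = (x - a) - (⟪u, x - a⟫_ℝ / ‖u‖ ^ 2) • u by simp only [z₀]; abel,
      inner_sub_right, real_inner_smul_right, real_inner_self_eq_norm_sq]
    field_simp
    ring
  refine le_antisymm ?_ ((le_infDist ⟨z₀, hz₀⟩).2 fun z hz => ?_)
  · calc infDist x _ ≤ dist x z₀ := infDist_le_dist_of_mem hz₀
      _ = |⟪u, x - a⟫_ℝ| / ‖u‖ := by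
        rw [dist_eq_norm, sub_sub_cancel, norm_smul, Real.norm_eq_abs, abs_div, abs_pow,
          abs_norm]
        field_simp
  · have hxz : ⟪u, x - a⟫_ℝ = ⟪u, x - z⟫_ℝ := by
      rw [← sub_sub_sub_cancel_right x z a, inner_sub_right u (x - a), hz, sub_zero]
    rw [div_le_iff₀ hu', dist_eq_norm, mul_comm, hxz]
    exact abs_real_inner_le_norm u (x - z)

end InnerProductSpace

section Plane

local notation "ℝ²" => EuclideanSpace ℝ (Fin 2)

theorem EuclideanSpace.inner_eq_fin_two (x y : ℝ²) : ⟪x, y⟫_ℝ = x 0 * y 0 + x 1 * y 1 := by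
  simp [PiLp.inner_apply, Fin.sum_univ_two, mul_comm]

def rotate90 (w : ℝ²) : ℝ² := !₂[-w 1, w 0]

theorem inner_rotate90 (w z : ℝ²) : ⟪rotate90 w, z⟫_ℝ = w 0 * z 1 - w 1 * z 0 := by
  simp only [rotate90, EuclideanSpace.inner_eq_fin_two, Fin.isValue, Matrix.cons_val_zero,
    Matrix.cons_val_one, Matrix.cons_val_fin_one]
  ring

theorem isLeftOf_iff_inner_rotate90 {a b p : ℝ²} :
    IsLeftOf a b p ↔ 0 ≤ ⟪rotate90 (b - a), p - a⟫_ℝ := by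
  simp [IsLeftOf, inner_rotate90]

theorem isLeftOf_or_isLeftOf_swap (a b p : ℝ²) : IsLeftOf a b p ∨ IsLeftOf b a p := by
  unfold IsLeftOf
  rcases le_total 0 ((b 0 - a 0) * (p 1 - a 1) - (b 1 - a 1) * (p 0 - a 0)) with h | h
  · exact .inl h
  · exact .inr (by linarith)

theorem exists_eq_smul_rotate90_of_inner_eq_zero {w v : ℝ²} (hw : w ≠ 0) (hv : ⟪w, v⟫_ℝ = 0) :
    ∃ c : ℝ, v = c • rotate90 w := by
  have hw' : w 0 ^ 2 + w 1 ^ 2 ≠ 0 := by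
    rw [sq, sq, ← EuclideanSpace.inner_eq_fin_two, real_inner_self_eq_norm_sq]
    exact pow_ne_zero 2 (norm_ne_zero_iff.2 hw)
  rw [EuclideanSpace.inner_eq_fin_two] at hv
  refine ⟨(w 0 * v 1 - w 1 * v 0) / (w 0 ^ 2 + w 1 ^ 2), ?_⟩
  ext i
  fin_cases i <;>
    simp only [rotate90, Fin.zero_eta, Fin.mk_one, Fin.isValue, PiLp.smul_apply, smul_eq_mul,
      Matrix.cons_val_zero, Matrix.cons_val_one, Matrix.cons_val_fin_one] <;>
    field_simp
  · linear_combination w 0 * hv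
  · linear_combination w 1 * hv

theorem coe_affineSpan_pair_eq_setOf_inner {a b q u : ℝ²} (hab : a ≠ b) (hu : u ≠ 0)
    (ha : ⟪u, a - q⟫_ℝ = 0) (hb : ⟪u, b - q⟫_ℝ = 0) :
    (line[ℝ, a, b] : Set ℝ²) = {z | ⟪u, z - q⟫_ℝ = 0} := by
  have hshift : ∀ z, ⟪u, z - a⟫_ℝ = ⟪u, z - q⟫_ℝ := fun z => by
    rw [← sub_sub_sub_cancel_right z a q, inner_sub_right u (z - q), ha, sub_zero]
  ext z
  simp only [SetLike.mem_coe, mem_affineSpan_pair_iff_exists_lineMap_eq, Set.mem_ofPred_eq]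
  constructor
  · rintro ⟨r, rfl⟩
    rw [← hshift, AffineMap.lineMap_apply_module', add_sub_cancel_right, real_inner_smul_right,
      hshift, hb, mul_zero]
  · intro hz
    obtain ⟨s, hs⟩ := exists_eq_smul_rotate90_of_inner_eq_zero hu ((hshift z).trans hz)
    obtain ⟨t, ht⟩ := exists_eq_smul_rotate90_of_inner_eq_zero hu ((hshift b).trans hb)
    have ht0 : t ≠ 0 := by
      rintro rfl
      exact hab (sub_eq_zero.1 (by simpa using ht)).symm
    refine ⟨s / t, ?_⟩
    rw [AffineMap.lineMap_apply_module', ht, smul_smul, div_mul_cancel₀ s ht0, ← hs,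
      sub_add_cancel]

theorem inner_sub_nonneg_of_isLeftOf {a b p x u : ℝ²} (hab : a ≠ b) (hu : ⟪u, b - a⟫_ℝ = 0)
    (hp : IsLeftOf a b p) (hup : 0 < ⟪u, p - a⟫_ℝ) (hx : IsLeftOf a b x) :
    0 ≤ ⟪u, x - a⟫_ℝ := by
  rw [isLeftOf_iff_inner_rotate90] at hp hx
  obtain ⟨c, rfl⟩ := exists_eq_smul_rotate90_of_inner_eq_zero (sub_ne_zero.2 hab.symm)
    ((real_inner_comm u (b - a)).trans hu)
  rw [real_inner_smul_left] at hup ⊢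
  exact mul_nonneg (pos_of_mul_pos_left hup hp).le hx

theorem dist_mem_lineDists {P : Finset ℝ²} {a b p q : ℝ²} (ha : a ∈ P) (hb : b ∈ P)
    (hp : p ∈ P) (hab : a ≠ b) (hpq : p ≠ q) (haq : ⟪p - q, a - q⟫_ℝ = 0)
    (hbq : ⟪p - q, b - q⟫_ℝ = 0) (hleft : IsLeftOf a b p)
    (hP : ∀ x ∈ P, ⟪p - q, x - q⟫_ℝ ≤ dist p q ^ 2) :
    dist p q ∈ lineDists P := by
  set u := p - q
  have hu : u ≠ 0 := sub_ne_zero.2 hpq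
  have hu' : 0 < ‖u‖ := norm_pos_iff.2 hu
  have hdist : dist p q = ‖u‖ := dist_eq_norm p q
  have hpu : ⟪u, p - q⟫_ℝ = ‖u‖ ^ 2 := real_inner_self_eq_norm_sq u
  have hshift : ∀ x, ⟪u, x - a⟫_ℝ = ⟪u, x - q⟫_ℝ := fun x => by
    rw [← sub_sub_sub_cancel_right x a q, inner_sub_right u (x - q), haq, sub_zero]
  have hline : ∀ x, infDist x line[ℝ, a, b] = |⟪u, x - q⟫_ℝ| / ‖u‖ := fun x => by
    rw [coe_affineSpan_pair_eq_setOf_inner hab hu haq hbq, infDist_setOf_inner_sub_eq_zero hu]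
  refine ⟨a, ha, b, hb, hab, (IsGreatest.csSup_eq ⟨?_, ?_⟩).symm⟩
  · refine ⟨p, ⟨hp, hleft⟩, ?_⟩
    dsimp only
    rw [hline, hpu, abs_of_nonneg (by positivity), hdist]
    field_simp
  · rintro _ ⟨x, ⟨hx, hxl⟩, rfl⟩
    have hx0 : 0 ≤ ⟪u, x - q⟫_ℝ := hshift x ▸ inner_sub_nonneg_of_isLeftOf hab
      ((hshift b).trans hbq) hleft (by rw [hshift, hpu]; positivity) hxl
    dsimp only
    rw [hline, abs_of_nonneg hx0, div_le_iff₀ hu', ← hdist, ← sq]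
    exact hP x hx

end Plane

/-- The Hausdorff distance between `conv Q` and `conv P` lies in the canonical set
`Ξ = 𝒱 ∪ ℒ`. -/
theorem hausdorffDist_mem_canonical_set
    (P Q : Finset (EuclideanSpace ℝ (Fin 2)))
    (hQP : (Q : Set (EuclideanSpace ℝ (Fin 2))) ⊆ P) (hQ : Q.Nonempty) :
    Metric.hausdorffDist (convexHull ℝ (Q : Set (EuclideanSpace ℝ (Fin 2))))
        (convexHull ℝ (P : Set (EuclideanSpace ℝ (Fin 2))))
      ∈ pairwiseDists P ∪ lineDists P := by
  set A := convexHull ℝ (Q : Set (EuclideanSpace ℝ (Fin 2)))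
  have hA : A.Nonempty := convexHull_nonempty_iff.2 (Finset.coe_nonempty.2 hQ)
  obtain ⟨p, hp, hpmax⟩ := P.exists_max_image (infDist · A)
    (Finset.coe_nonempty.1 ((Finset.coe_nonempty.2 hQ).mono hQP))
  obtain ⟨q, hqA, hpq⟩ := (Q.finite_toSet.isCompact_convexHull (𝕜 := ℝ)).exists_infDist_eq_dist hA p
  rw [hausdorffDist_convexHull_eq_infDist (convex_convexHull ℝ _) (convexHull_mono hQP) hp hpmax,
    hpq]
  by_cases hqP : q ∈ P
  · exact .inl ⟨p, hp, q, hqP, rfl⟩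
  have hpq' : p ≠ q := fun h => hqP (h ▸ hp)
  have hsupp : ∀ y ∈ A, ⟪p - q, y - q⟫_ℝ ≤ 0 := fun y hy =>
    inner_sub_nonpos_of_dist_eq_infDist (convex_convexHull ℝ _) hqA hpq.symm hy
  obtain ⟨a, ha, b, hb, hab, haq, hbq⟩ := exists_ne_of_mem_convexHull_of_inner_sub_nonpos hqA
    (fun h => hqP (hQP h)) fun y hy => hsupp y (subset_convexHull ℝ _ hy)
  have hfar : ∀ x ∈ P, ⟪p - q, x - q⟫_ℝ ≤ dist p q ^ 2 := fun x hx => by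
    have := (inner_sub_div_norm_le_infDist hA hsupp x).trans ((hpmax x hx).trans hpq.le)
    rwa [div_le_iff₀ (norm_pos_iff.2 (sub_ne_zero.2 hpq')), ← dist_eq_norm, ← sq] at this
  right
  rcases isLeftOf_or_isLeftOf_swap a b p with h | h
  · exact dist_mem_lineDists (hQP ha) (hQP hb) hp hab hpq' haq hbq h hfar
  · exact dist_mem_lineDists (hQP hb) (hQP ha) hp hab.symm hpq' hbq haq h hfar
end

section
/- Let P be a finite point set in the plane, k ≥ 1, and let r⋆ = r⋆(P,k) > 0 be the optimal Hausdorff distance over subsets of size at most k, achieved by Q⋆. Let p ∈ P maximize dist(p, conv(Q⋆)) and let q be the nearest point of conv(Q⋆) to p. Then either r⋆ = ‖p − q′‖ for some q′ ∈ P (when q is a vertex of conv(Q⋆)), or r⋆ = dist(p, ℓ) where ℓ is a line through two points of P and p is the farthest point of P from ℓ among points of P in the closed halfplane bounded by ℓ not containing the interior of conv(Q⋆). -/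
/-!
Since the closed `r`-neighbourhood of the convex set `conv Q⋆` is convex, the Hausdorff distance
from `conv Q⋆` to `conv P` is `max_{p ∈ P} dist(p, conv Q⋆)`, so `r⋆ = dist p q`. The nearest
point `q` lies in the convex hull of the face of `Q⋆` exposed by `p - q`. If that face is a single
point, `q ∈ Q⋆ ⊆ P`. Otherwise it contains two points `a ≠ b`, and in the plane the line `ℓ = ab`
is the line through `q` orthogonal to `p - q`, whence `dist(p, ℓ) = r⋆`. A point `p' ∈ P` lying
strictly on the side of `ℓ` of no point of `conv Q⋆` is not strictly on the side of its nearest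
point `y ∈ conv Q⋆`, so the segment `p'y` meets `ℓ` and
`dist(p', ℓ) ≤ dist(p', conv Q⋆) ≤ dist(p, conv Q⋆) = dist(p, ℓ)`.
-/

open Metric RealInnerProductSpace

section Face

variable {𝕜 E : Type*} [Field 𝕜] [LinearOrder 𝕜] [IsStrictOrderedRing 𝕜] [AddCommGroup E]
  [Module 𝕜 E]

theorem Finset.mem_convexHull_filter_of_forall_le {s : Finset E} {q : E}
    (f : E →ₗ[𝕜] 𝕜) (hq : q ∈ convexHull 𝕜 (s : Set E)) (hle : ∀ x ∈ s, f x ≤ f q) :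
    q ∈ convexHull 𝕜 (s.filter (f · = f q) : Set E) := by
  obtain ⟨w, hw0, hw1, hwq⟩ := Finset.mem_convexHull.1 hq
  have hgap : ∑ x ∈ s, w x * (f q - f x) = 0 := by
    rw [Finset.centerMass_eq_of_sum_1 _ _ hw1] at hwq
    simp only [mul_sub, Finset.sum_sub_distrib, ← Finset.sum_mul, hw1, one_mul]
    simp [← hwq, map_sum, smul_eq_mul]
  have hterm := (Finset.sum_eq_zero_iff_of_nonneg fun x hx =>
    mul_nonneg (hw0 x hx) (sub_nonneg.2 (hle x hx))).1 hgap
  have hsupp : ∀ x ∈ s.filter (w · ≠ 0), x ∈ s.filter (f · = f q) := fun x hx => by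
    obtain ⟨hxs, hwx⟩ := Finset.mem_filter.1 hx
    exact Finset.mem_filter.2
      ⟨hxs, (sub_eq_zero.1 ((mul_eq_zero.1 (hterm x hxs)).resolve_left hwx)).symm⟩
  have hmem := Finset.centerMass_mem_convexHull (s.filter (w · ≠ 0)) (z := id)
    (fun x hx => hw0 x (Finset.mem_filter.1 hx).1)
    (by rw [Finset.sum_filter_ne_zero, hw1]; exact one_pos) hsupp
  rwa [Finset.centerMass_filter_ne_zero, hwq] at hmem

end Face

section Hausdorff

variable {E : Type*} [NormedAddCommGroup E] [NormedSpace ℝ E]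

theorem hausdorffDist_convexHull_eq_infDist_s12 {Q P : Set E} {p : E} (hQ : Q.Nonempty)
    (hP : Bornology.IsBounded P) (hQP : Q ⊆ P) (hp : p ∈ P)
    (hmax : ∀ p' ∈ P, infDist p' (convexHull ℝ Q) ≤ infDist p (convexHull ℝ Q)) :
    hausdorffDist (convexHull ℝ Q) (convexHull ℝ P) = infDist p (convexHull ℝ Q) := by
  set C := convexHull ℝ Q
  have hCne : C.Nonempty := hQ.convexHull
  have hPC : convexHull ℝ P ⊆ cthickening (infDist p C) C := by
    refine convexHull_min (fun y hy => ?_) ((convex_convexHull ℝ Q).cthickening _)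
    rw [mem_cthickening_iff, ← ENNReal.ofReal_toReal (infEDist_ne_top hCne)]
    exact ENNReal.ofReal_le_ofReal (hmax y hy)
  refine le_antisymm (hausdorffDist_le_of_infDist infDist_nonneg (fun x hx => ?_)
    fun x hx => ?_) ?_
  · rw [infDist_zero_of_mem (convexHull_mono hQP hx)]
    exact infDist_nonneg
  · have := hPC hx
    rwa [mem_cthickening_iff, ENNReal.le_ofReal_iff_toReal_le (infEDist_ne_top hCne)
      infDist_nonneg] at this
  · rw [hausdorffDist_comm]
    refine infDist_le_hausdorffDist_of_mem (subset_convexHull ℝ P hp)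
      (hausdorffEDist_ne_top_of_nonempty_of_bounded ⟨p, subset_convexHull ℝ P hp⟩ hCne
        (isBounded_convexHull.2 hP) (isBounded_convexHull.2 (hP.subset hQP)))

theorem AffineSubspace.WOppSide.infDist_le_dist {s : AffineSubspace ℝ E} {x y : E}
    (h : s.WOppSide x y) : infDist x s ≤ dist x y := by
  obtain ⟨z, hz, hxzy⟩ := AffineSubspace.wOppSide_iff_exists_wbtw.1 h
  calc infDist x s ≤ dist x z := infDist_le_dist_of_mem hz
    _ ≤ dist x y := by rw [← hxzy.dist_add_dist]; exact le_add_of_nonneg_right dist_nonneg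

end Hausdorff

section Hyperplane

variable {E : Type*} [NormedAddCommGroup E] [InnerProductSpace ℝ E]

theorem inner_sub_nonpos_of_dist_eq_infDist_s12 {C : Set E} {p q : E} (hC : Convex ℝ C)
    (hq : q ∈ C) (h : dist p q = infDist p C) : ∀ x ∈ C, ⟪p - q, x - q⟫ ≤ 0 := by
  refine (norm_eq_iInf_iff_real_inner_le_zero hC hq).1 ?_
  rw [← dist_eq_norm, h, infDist_eq_iInf]
  simp only [dist_eq_norm]

theorem AffineSubspace.mem_mk'_orthogonal_span_singleton_iff {q u z : E} :
    z ∈ AffineSubspace.mk' q (ℝ ∙ u)ᗮ ↔ ⟪u, z - q⟫ = 0 := by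
  rw [AffineSubspace.mem_mk', vsub_eq_sub, Submodule.mem_orthogonal_singleton_iff_inner_right]

theorem infDist_mk'_orthogonal_span_singleton_sub (p q : E) :
    infDist p (AffineSubspace.mk' q (ℝ ∙ (p - q))ᗮ) = dist p q := by
  have hq : q ∈ AffineSubspace.mk' q (ℝ ∙ (p - q))ᗮ := AffineSubspace.self_mem_mk' _ _
  refine le_antisymm (infDist_le_dist_of_mem hq) ((le_infDist ⟨q, hq⟩).2 fun z hz => ?_)
  have hpyth : ‖p - z‖ ^ 2 = ‖p - q‖ ^ 2 + ‖z - q‖ ^ 2 := by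
    rw [← sub_sub_sub_cancel_right p z q, norm_sub_sq_real,
      AffineSubspace.mem_mk'_orthogonal_span_singleton_iff.1 hz, mul_zero, sub_zero]
  rw [dist_eq_norm, dist_eq_norm]
  exact le_of_pow_le_pow_left₀ two_ne_zero (norm_nonneg _)
    (hpyth ▸ le_add_of_nonneg_right (sq_nonneg _))

theorem AffineSubspace.wOppSide_mk'_orthogonal_of_not_sSameSide {q u x y : E}
    (h : ¬ (AffineSubspace.mk' q (ℝ ∙ u)ᗮ).SSameSide x y) :
    (AffineSubspace.mk' q (ℝ ∙ u)ᗮ).WOppSide x y := by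
  set H := AffineSubspace.mk' q (ℝ ∙ u)ᗮ
  have hqH : q ∈ H := AffineSubspace.self_mem_mk' _ _
  by_cases hx : x ∈ H
  · exact AffineSubspace.wOppSide_of_left_mem y hx
  have hα : ⟪u, x - q⟫ ≠ 0 := mt AffineSubspace.mem_mk'_orthogonal_span_singleton_iff.2 hx
  set c := ⟪u, y - q⟫ / ⟪u, x - q⟫
  -- `y` moved parallel to `x - q` until it hits `H`
  have hp₂ : y - c • (x - q) ∈ H := by
    rw [AffineSubspace.mem_mk'_orthogonal_span_singleton_iff, sub_right_comm, inner_sub_right,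
      real_inner_smul_right, div_mul_cancel₀ _ hα, sub_self]
  rcases lt_or_ge 0 c with hc | hc
  · refine absurd ((AffineSubspace.sSameSide_iff_exists_left hqH).2
      ⟨hx, fun hy => ?_, _, hp₂, ?_⟩) h
    · rw [AffineSubspace.mem_mk'_orthogonal_span_singleton_iff] at hy
      simp [c, hy] at hc
    · rw [vsub_eq_sub, vsub_eq_sub, sub_sub_cancel]
      exact SameRay.sameRay_nonneg_smul_right _ hc.le
  · refine (AffineSubspace.wOppSide_iff_exists_left hqH).2 (Or.inr ⟨_, hp₂, ?_⟩)
    rw [vsub_eq_sub, vsub_eq_sub, sub_sub_cancel_left, ← neg_smul]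
    exact SameRay.sameRay_nonneg_smul_right _ (neg_nonneg.2 hc)

theorem affineSpan_pair_eq_mk'_orthogonal_span_singleton (hE : Module.finrank ℝ E = 2)
    {q u a b : E} (hu : u ≠ 0) (hab : a ≠ b) (ha : ⟪u, a - q⟫ = 0) (hb : ⟪u, b - q⟫ = 0) :
    affineSpan ℝ {a, b} = AffineSubspace.mk' q (ℝ ∙ u)ᗮ := by
  have : Fact (Module.finrank ℝ E = 1 + 1) := ⟨hE⟩
  have : FiniteDimensional ℝ E := Module.finite_of_finrank_eq_succ hE
  have hle : affineSpan ℝ {a, b} ≤ AffineSubspace.mk' q (ℝ ∙ u)ᗮ :=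
    affineSpan_pair_le_of_mem_of_mem (AffineSubspace.mem_mk'_orthogonal_span_singleton_iff.2 ha)
      (AffineSubspace.mem_mk'_orthogonal_span_singleton_iff.2 hb)
  refine AffineSubspace.eq_of_direction_eq_of_nonempty_of_le
    (Submodule.eq_of_le_of_finrank_eq (AffineSubspace.direction_le hle) ?_)
    ⟨a, subset_affineSpan _ _ (by simp)⟩ hle
  rw [direction_affineSpan, vectorSpan_pair, AffineSubspace.direction_mk',
    finrank_span_singleton (vsub_ne_zero.2 hab),
    Submodule.finrank_orthogonal_span_singleton (n := 1) hu]

end Hyperplane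

theorem optimal_value_is_canonical_general
    (P Qs : Finset (EuclideanSpace ℝ (Fin 2)))
    (hQP : Qs ⊆ P)
    (rs : ℝ)
    (hrs : rs = Metric.hausdorffDist (convexHull ℝ (Qs : Set (EuclideanSpace ℝ (Fin 2))))
      (convexHull ℝ (P : Set (EuclideanSpace ℝ (Fin 2)))))
    (p q : EuclideanSpace ℝ (Fin 2)) (hp : p ∈ P)
    (hmax : ∀ p' ∈ P,
      Metric.infDist p' (convexHull ℝ (Qs : Set (EuclideanSpace ℝ (Fin 2)))) ≤
        Metric.infDist p (convexHull ℝ (Qs : Set (EuclideanSpace ℝ (Fin 2)))))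
    (hqmem : q ∈ convexHull ℝ (Qs : Set (EuclideanSpace ℝ (Fin 2))))
    (hqnear : dist p q =
      Metric.infDist p (convexHull ℝ (Qs : Set (EuclideanSpace ℝ (Fin 2))))) :
    (∃ q' ∈ P, rs = dist p q') ∨
      ∃ a ∈ P, ∃ b ∈ P, a ≠ b ∧
        rs = Metric.infDist p (affineSpan ℝ ({a, b} : Set (EuclideanSpace ℝ (Fin 2))) :
            Set (EuclideanSpace ℝ (Fin 2))) ∧
        ∀ p' ∈ P,
          (∀ x ∈ convexHull ℝ (Qs : Set (EuclideanSpace ℝ (Fin 2))),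
            ¬ (affineSpan ℝ ({a, b} : Set (EuclideanSpace ℝ (Fin 2)))).SSameSide p' x) →
          Metric.infDist p' (affineSpan ℝ ({a, b} : Set (EuclideanSpace ℝ (Fin 2))) :
              Set (EuclideanSpace ℝ (Fin 2))) ≤
            Metric.infDist p (affineSpan ℝ ({a, b} : Set (EuclideanSpace ℝ (Fin 2))) :
              Set (EuclideanSpace ℝ (Fin 2))) := by
  set C := convexHull ℝ (Qs : Set (EuclideanSpace ℝ (Fin 2)))
  have hr : rs = dist p q := by
    rw [hrs, hausdorffDist_convexHull_eq_infDist_s12 (convexHull_nonempty_iff.1 ⟨q, hqmem⟩)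
      P.finite_toSet.isBounded (by exact_mod_cast hQP) hp hmax, hqnear]
  rcases eq_or_ne p q with rfl | hpq
  · exact Or.inl ⟨p, hp, hr⟩
  have hobtuse := inner_sub_nonpos_of_dist_eq_infDist_s12 (convex_convexHull ℝ _) hqmem hqnear
  have hface := Qs.mem_convexHull_filter_of_forall_le (innerₗ _ (p - q)) hqmem fun x hx => by
    simpa only [innerₗ_apply_apply, inner_sub_right, sub_nonpos]
      using hobtuse x (subset_convexHull ℝ _ hx)
  set F := Qs.filter fun x => innerₗ _ (p - q) x = innerₗ _ (p - q) q
  have hFQ : ∀ x ∈ F, x ∈ Qs ∧ ⟪p - q, x - q⟫ = 0 := fun x hx => by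
    simpa only [innerₗ_apply_apply, inner_sub_right, sub_eq_zero] using Finset.mem_filter.1 hx
  rcases (F : Set (EuclideanSpace ℝ (Fin 2))).subsingleton_or_nontrivial with hF | hF
  · rw [hF.convex.convexHull_eq] at hface
    exact Or.inl ⟨q, hQP (hFQ q hface).1, hr⟩
  obtain ⟨a, ha, b, hb, hab⟩ := hF
  have hL := affineSpan_pair_eq_mk'_orthogonal_span_singleton finrank_euclideanSpace_fin
    (sub_ne_zero.2 hpq) hab (hFQ a ha).2 (hFQ b hb).2
  refine Or.inr ⟨a, hQP (hFQ a ha).1, b, hQP (hFQ b hb).1, hab, ?_, fun p' hp' hside => ?_⟩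
  · rw [hL, infDist_mk'_orthogonal_span_singleton_sub, hr]
  obtain ⟨y, hyC, hy⟩ :=
    (Qs.finite_toSet.isCompact_convexHull ℝ).exists_infDist_eq_dist ⟨q, hqmem⟩ p'
  rw [hL] at hside ⊢
  calc infDist p' (AffineSubspace.mk' q (ℝ ∙ (p - q))ᗮ)
      ≤ dist p' y := (AffineSubspace.wOppSide_mk'_orthogonal_of_not_sSameSide
        (hside y hyC)).infDist_le_dist
    _ = infDist p' C := hy.symm
    _ ≤ infDist p C := hmax p' hp'
    _ = infDist p (AffineSubspace.mk' q (ℝ ∙ (p - q))ᗮ) := by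
      rw [infDist_mk'_orthogonal_span_singleton_sub, hqnear]

/-- Structure of the optimal value: if `Q⋆ ⊆ P`, `|Q⋆| ≤ k`, attains the optimal Hausdorff
distance `r⋆ > 0` among subsets of size at most `k`, `p ∈ P` maximizes the distance to
`conv Q⋆`, and `q` is the nearest point of `conv Q⋆` to `p`, then either `r⋆` is the
distance from `p` to a point of `P`, or `r⋆ = dist(p, ℓ)` for a line `ℓ` through two points
of `P`, where `p` is farthest from `ℓ` among the points of `P` in the closed halfplane
bounded by `ℓ` not containing the interior of `conv Q⋆`. -/
theorem optimal_value_is_canonical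
    (P Qs : Finset (EuclideanSpace ℝ (Fin 2)))
    (hQP : Qs ⊆ P) (hQne : Qs.Nonempty) (k : ℕ) (hk : 1 ≤ k) (hcard : Qs.card ≤ k)
    (rs : ℝ)
    (hrs : rs = Metric.hausdorffDist (convexHull ℝ (Qs : Set (EuclideanSpace ℝ (Fin 2))))
      (convexHull ℝ (P : Set (EuclideanSpace ℝ (Fin 2)))))
    (hpos : 0 < rs)
    (hopt : ∀ Q' : Finset (EuclideanSpace ℝ (Fin 2)), Q'.Nonempty → Q' ⊆ P → Q'.card ≤ k →
      rs ≤ Metric.hausdorffDist (convexHull ℝ (Q' : Set (EuclideanSpace ℝ (Fin 2))))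
        (convexHull ℝ (P : Set (EuclideanSpace ℝ (Fin 2)))))
    (p q : EuclideanSpace ℝ (Fin 2)) (hp : p ∈ P)
    (hmax : ∀ p' ∈ P,
      Metric.infDist p' (convexHull ℝ (Qs : Set (EuclideanSpace ℝ (Fin 2)))) ≤
        Metric.infDist p (convexHull ℝ (Qs : Set (EuclideanSpace ℝ (Fin 2)))))
    (hqmem : q ∈ convexHull ℝ (Qs : Set (EuclideanSpace ℝ (Fin 2))))
    (hqnear : dist p q =
      Metric.infDist p (convexHull ℝ (Qs : Set (EuclideanSpace ℝ (Fin 2))))) :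
    (∃ q' ∈ P, rs = dist p q') ∨
      ∃ a ∈ P, ∃ b ∈ P, a ≠ b ∧
        rs = Metric.infDist p (affineSpan ℝ ({a, b} : Set (EuclideanSpace ℝ (Fin 2))) :
            Set (EuclideanSpace ℝ (Fin 2))) ∧
        ∀ p' ∈ P,
          (∀ x ∈ convexHull ℝ (Qs : Set (EuclideanSpace ℝ (Fin 2))),
            ¬ (affineSpan ℝ ({a, b} : Set (EuclideanSpace ℝ (Fin 2)))).SSameSide p' x) →
          Metric.infDist p' (affineSpan ℝ ({a, b} : Set (EuclideanSpace ℝ (Fin 2))) :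
              Set (EuclideanSpace ℝ (Fin 2))) ≤
            Metric.infDist p (affineSpan ℝ ({a, b} : Set (EuclideanSpace ℝ (Fin 2))) :
              Set (EuclideanSpace ℝ (Fin 2))) :=
  optimal_value_is_canonical_general P Qs hQP rs hrs p q hp hmax hqmem hqnear
end

section
/- Sampling gap bound: Let S be a set of N ≤ n² real values and let Π be a multiset of m = c·n^{3/2}·log n values sampled independently and uniformly from S. Then, with probability at least 1 − 1/n^{Ω(c)}, every open interval between two consecutive values of Π (together with the intervals below the minimum and above the maximum of Π) contains at most O(√n) values of S. -/
/-!
Sort `S` and cut it into `#S / k` consecutive blocks of `k = ⌈√n⌉` values. An open interval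
that contains no sample but more than `4√n ≥ 2k` values of `S` contains a whole block, so some
block is missed by all `m` samples. A fixed block is missed with probability
`(1 - k/#S)^m ≤ exp(-m √n / n²) ≤ n^{-c}`, and there are at most `n² / √n = n^{3/2}` blocks.
-/

open MeasureTheory Finset

theorem Nat.exists_le_mul_and_succ_mul_lt {k : ℕ} (hk : 0 < k) (a : ℕ) :
    ∃ j, a ≤ j * k ∧ (j + 1) * k < a + 2 * k := by
  refine ⟨(a + k - 1) / k, ?_, ?_⟩
  · have := Nat.div_add_mod (a + k - 1) k
    have := Nat.mod_lt (a + k - 1) hk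
    rw [mul_comm]; omega
  · have := Nat.div_mul_le_self (a + k - 1) k
    rw [add_mul]; omega

section Blocks

variable {α : Type*} [LinearOrder α]

theorem List.Pairwise.getElem_mem_of_ordConnected {L : List α} (hL : L.Pairwise (· ≤ ·))
    {I : Set α} (hI : I.OrdConnected) {a b i : ℕ} (ha : a < L.length) (hb : b < L.length)
    (hi : i < L.length) (hai : a ≤ i) (hib : i ≤ b) (haI : L[a] ∈ I) (hbI : L[b] ∈ I) :
    L[i] ∈ I :=
  hI.out haI hbI ⟨hL.rel_get_of_le (a := ⟨a, ha⟩) (b := ⟨i, hi⟩) hai,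
    hL.rel_get_of_le (a := ⟨i, hi⟩) (b := ⟨b, hb⟩) hib⟩

theorem List.Pairwise.exists_drop_take_subset {L : List α} (hL : L.Pairwise (· ≤ ·))
    {I : Set α} (hI : I.OrdConnected) {k : ℕ} (hk : 0 < k) {T : Finset α}
    (hTL : ∀ a ∈ T, a ∈ L) (hTI : ∀ a ∈ T, a ∈ I) (hT : 2 * k ≤ #T) :
    ∃ j, (j + 1) * k ≤ L.length ∧ ∀ a ∈ (L.drop (j * k)).take k, a ∈ I := by
  classical
  set P := T.image L.idxOf
  have hP : P.Nonempty := (card_pos.mp (by omega)).image _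
  have hPT : #P = #T :=
    card_image_of_injOn fun a ha b _ hab => (List.idxOf_inj (hTL a ha)).mp hab
  have hPL : ∀ q ∈ P, ∃ hq : q < L.length, L[q] ∈ I := by
    simp only [P, mem_image]
    rintro q ⟨a, ha, rfl⟩
    have hlt := List.idxOf_lt_length_iff.mpr (hTL a ha)
    exact ⟨hlt, by rw [List.getElem_idxOf hlt]; exact hTI a ha⟩
  obtain ⟨ha, haI⟩ := hPL _ (P.min'_mem hP)
  obtain ⟨hb, hbI⟩ := hPL _ (P.max'_mem hP)
  have hspan : P.min' hP + 2 * k ≤ P.max' hP + 1 := by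
    have := card_le_card (t := Icc (P.min' hP) (P.max' hP))
      fun q hq => mem_Icc.mpr ⟨P.min'_le q hq, P.le_max' q hq⟩
    simp only [Nat.card_Icc] at this
    omega
  obtain ⟨j, hj, hjk⟩ := Nat.exists_le_mul_and_succ_mul_lt hk (P.min' hP)
  refine ⟨j, by omega, fun a haj => ?_⟩
  obtain ⟨p, hp, rfl⟩ := List.getElem_of_mem haj
  simp only [List.length_take, List.length_drop] at hp
  rw [List.getElem_take, List.getElem_drop]
  rw [add_mul] at hjk
  exact hL.getElem_mem_of_ordConnected hI ha hb _ (by omega) (by omega) haI hbI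

def Finset.sortedBlock (S : Finset α) (k j : ℕ) : Finset α :=
  (((S.sort (· ≤ ·)).drop (j * k)).take k).toFinset

theorem Finset.sortedBlock_subset (S : Finset α) (k j : ℕ) : S.sortedBlock k j ⊆ S := by
  intro a ha
  rw [sortedBlock, List.mem_toFinset] at ha
  exact (S.mem_sort _).mp (List.mem_of_mem_drop (List.mem_of_mem_take ha))

theorem Finset.card_sortedBlock {S : Finset α} {k j : ℕ} (h : (j + 1) * k ≤ #S) :
    #(S.sortedBlock k j) = k := by
  have hnd : (((S.sort (· ≤ ·)).drop (j * k)).take k).Nodup :=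
    (S.sort_nodup _).sublist ((List.take_sublist _ _).trans (List.drop_sublist _ _))
  rw [sortedBlock, List.toFinset_card_of_nodup hnd, List.length_take, List.length_drop,
    length_sort]
  rw [add_mul] at h
  omega

theorem Finset.exists_sortedBlock_subset {S : Finset α} {I : Set α} (hI : I.OrdConnected)
    {k : ℕ} (hk : 0 < k) (hSI : 2 * k ≤ ((S : Set α) ∩ I).ncard) :
    ∃ j < #S / k, (S.sortedBlock k j : Set α) ⊆ I := by
  have hfin : ((S : Set α) ∩ I).Finite := S.finite_toSet.inter_of_left I
  rw [Set.ncard_eq_toFinset_card _ hfin] at hSI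
  obtain ⟨j, hjS, hjI⟩ := (S.pairwise_sort (· ≤ ·)).exists_drop_take_subset hI hk
    (T := hfin.toFinset) (fun a ha => (S.mem_sort _).mpr (by simp_all))
    (fun a ha => by simp_all) hSI
  refine ⟨j, ?_, fun a ha => hjI a (by simpa [sortedBlock] using ha)⟩
  rw [length_sort] at hjS
  exact (Nat.le_div_iff_mul_le hk).mpr hjS

end Blocks

theorem MeasureTheory.Measure.pi_setOf_forall_notMem {ι α : Type*} [Fintype ι]
    [MeasurableSpace α] (μ : Measure α) [IsProbabilityMeasure μ] {B : Set α}
    (hB : MeasurableSet B) :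
    Measure.pi (fun _ : ι => μ) {ω | ∀ i, ω i ∉ B} = (1 - μ B) ^ Fintype.card ι := by
  have : {ω : ι → α | ∀ i, ω i ∉ B} = Set.univ.pi fun _ => Bᶜ := by ext; simp
  rw [this, Measure.pi_pi, prob_compl_eq_one_sub hB, prod_const, card_univ]

theorem PMF.toMeasure_uniformOfFinset_apply_of_subset {α : Type*} [MeasurableSpace α]
    [MeasurableSingletonClass α] {S B : Finset α} (hS : S.Nonempty) (hB : B ⊆ S) :
    (PMF.uniformOfFinset S hS).toMeasure B = ENNReal.ofReal (#B / #S) := by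
  classical
  rw [PMF.toMeasure_uniformOfFinset_apply hS _ B.measurableSet,
    ENNReal.ofReal_div_of_pos (by simpa using hS)]
  simp only [mem_coe]
  rw [filter_mem_eq_inter, inter_eq_right.mpr hB]
  simp

theorem PMF.measure_pi_uniformOfFinset_setOf_forall_notMem {α : Type*} [MeasurableSpace α]
    [MeasurableSingletonClass α] {S B : Finset α} (hS : S.Nonempty) (hB : B ⊆ S) (m : ℕ) :
    Measure.pi (fun _ : Fin m => (PMF.uniformOfFinset S hS).toMeasure)
        {ω | ∀ i, ω i ∉ (B : Set α)} = ENNReal.ofReal ((1 - #B / #S) ^ m) := by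
  have hBS : (#B : ℝ) / #S ≤ 1 :=
    div_le_one_of_le₀ (by exact_mod_cast card_le_card hB) (by positivity)
  rw [Measure.pi_setOf_forall_notMem _ B.measurableSet,
    PMF.toMeasure_uniformOfFinset_apply_of_subset hS hB, Fintype.card_fin,
    ENNReal.ofReal_pow (by linarith), ENNReal.ofReal_sub _ (by positivity), ENNReal.ofReal_one]

theorem one_sub_pow_le_rpow_neg {p x c : ℝ} {m : ℕ} (hp : p ≤ 1) (hx : 0 < x)
    (hm : c * Real.log x ≤ m * p) : (1 - p) ^ m ≤ x ^ (-c) := calc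
  (1 - p) ^ m ≤ Real.exp (-p) ^ m := pow_le_pow_left₀ (by linarith) (Real.one_sub_le_exp_neg p) m
  _ = Real.exp (-(m * p)) := by rw [← Real.exp_nat_mul]; ring_nf
  _ ≤ x ^ (-c) := by rw [Real.rpow_def_of_pos hx]; exact Real.exp_le_exp.mpr (by linarith)

theorem sqrt_mul_rpow_three_halves {x : ℝ} (hx : 0 ≤ x) : √x * x ^ ((3 : ℝ) / 2) = x ^ 2 := by
  rw [Real.sqrt_eq_rpow, ← Real.rpow_add' hx (by norm_num)]
  norm_num

theorem natCast_mul_one_sub_div_pow_le {n : ℕ} (hn : 2 ≤ n) {c : ℝ} (hc : 3 ≤ c)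
    {N k t m : ℕ} (hN : N ≤ n ^ 2) (hk : √n ≤ k) (htk : t * k ≤ N)
    (hm : c * (n : ℝ) ^ ((3 : ℝ) / 2) * Real.log n ≤ m) :
    (t : ℝ) * (1 - (k : ℝ) / N) ^ m ≤ (n : ℝ) ^ (-(1 / 2 * c)) := by
  have hn0 : (0 : ℝ) < n := by positivity
  have hsqrt : 0 < √(n : ℝ) := Real.sqrt_pos.mpr hn0
  have hNr : (N : ℝ) ≤ (n : ℝ) ^ 2 := by exact_mod_cast hN
  rcases Nat.eq_zero_or_pos t with rfl | ht
  · simp only [CharP.cast_eq_zero, zero_mul]; positivity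
  have hkN : (k : ℝ) ≤ N := by exact_mod_cast (Nat.le_mul_of_pos_left k ht).trans htk
  have hN0 : (0 : ℝ) < N := hsqrt.trans_le (hk.trans hkN)
  have hmiss : (1 - (k : ℝ) / N) ^ m ≤ (n : ℝ) ^ (-c) := by
    refine one_sub_pow_le_rpow_neg (div_le_one_of_le₀ hkN hN0.le) hn0 ?_
    calc c * Real.log n
        = c * (n : ℝ) ^ ((3 : ℝ) / 2) * Real.log n * (√n / (n : ℝ) ^ 2) := by
          rw [← sqrt_mul_rpow_three_halves hn0.le]; field_simp
      _ ≤ m * (k / N) := by gcongr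
  have hblocks : (t : ℝ) ≤ (n : ℝ) ^ ((3 : ℝ) / 2) := by
    refine le_of_mul_le_mul_left ?_ hsqrt
    calc √n * t ≤ k * t := by gcongr
      _ ≤ N := by exact_mod_cast (mul_comm k t).trans_le htk
      _ ≤ _ := by rw [sqrt_mul_rpow_three_halves hn0.le]; exact hNr
  calc (t : ℝ) * (1 - (k : ℝ) / N) ^ m ≤ (n : ℝ) ^ ((3 : ℝ) / 2) * (n : ℝ) ^ (-c) := by
        gcongr
        exact pow_nonneg (sub_nonneg.mpr (div_le_one_of_le₀ hkN hN0.le)) m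
    _ = (n : ℝ) ^ ((3 : ℝ) / 2 + -c) := (Real.rpow_add hn0 _ _).symm
    _ ≤ (n : ℝ) ^ (-(1 / 2 * c)) :=
        Real.rpow_le_rpow_of_exponent_le (by exact_mod_cast (by omega : 1 ≤ n)) (by linarith)

/-- Sampling gap bound: there are constants `c₀, C, γ > 0` such that for any `n ≥ 2`, any
nonempty set `S` of at most `n²` reals, any `c ≥ c₀` and `m = ⌈c n^{3/2} log n⌉` i.i.d.
uniform samples from `S`, the probability that some open interval containing no sample
contains more than `C √n` values of `S` is at most `n^{-γ c}`. (Open intervals containing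
no sample include the gaps between consecutive sorted samples as well as the intervals
below the minimum and above the maximum sample.) -/
theorem sampling_gap_bound :
    ∃ c₀ C γ : ℝ, 0 < c₀ ∧ 0 < C ∧ 0 < γ ∧
      ∀ n : ℕ, 2 ≤ n →
      ∀ S : Finset ℝ, ∀ hS : S.Nonempty, S.card ≤ n ^ 2 →
      ∀ c : ℝ, c₀ ≤ c →
      ∀ m : ℕ, m = ⌈c * (n : ℝ) ^ ((3 : ℝ) / 2) * Real.log n⌉₊ →
      (Measure.pi fun _ : Fin m => (PMF.uniformOfFinset S hS).toMeasure)
          {ω | ∃ x y : ℝ, (∀ i : Fin m, ω i ∉ Set.Ioo x y) ∧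
            C * Real.sqrt n < (((S : Set ℝ) ∩ Set.Ioo x y).ncard : ℝ)}
        ≤ ENNReal.ofReal ((n : ℝ) ^ (-(γ * c))) := by
  refine ⟨3, 4, 1 / 2, by norm_num, by norm_num, by norm_num, ?_⟩
  intro n hn S hS hScard c hc m hm
  set μ := Measure.pi fun _ : Fin m => (PMF.uniformOfFinset S hS).toMeasure
  set k := ⌈√(n : ℝ)⌉₊
  have hk : 0 < k := Nat.ceil_pos.mpr (Real.sqrt_pos.mpr (by positivity))
  have h2k : 2 * (k : ℝ) < 4 * √n := by
    have := Nat.ceil_lt_add_one (Real.sqrt_nonneg (n : ℝ))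
    have := Real.one_le_sqrt.mpr (show (1 : ℝ) ≤ n by exact_mod_cast (by omega : 1 ≤ n))
    linarith
  calc μ {ω | ∃ x y : ℝ, (∀ i : Fin m, ω i ∉ Set.Ioo x y) ∧
          4 * √n < (((S : Set ℝ) ∩ Set.Ioo x y).ncard : ℝ)}
      ≤ μ (⋃ j ∈ range (#S / k), {ω | ∀ i, ω i ∉ (S.sortedBlock k j : Set ℝ)}) := by
        refine measure_mono fun ω ⟨x, y, hmiss, hbig⟩ => ?_
        obtain ⟨j, hj, hjI⟩ := S.exists_sortedBlock_subset Set.ordConnected_Ioo hk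
          (by exact_mod_cast (h2k.trans hbig).le)
        exact Set.mem_biUnion (mem_range.mpr hj) fun i hi => hmiss i (hjI hi)
    _ ≤ ∑ j ∈ range (#S / k), μ {ω | ∀ i, ω i ∉ (S.sortedBlock k j : Set ℝ)} :=
        measure_biUnion_finset_le _ _
    _ = ∑ _j ∈ range (#S / k), ENNReal.ofReal ((1 - k / #S) ^ m) := by
        refine sum_congr rfl fun j hj => ?_
        rw [PMF.measure_pi_uniformOfFinset_setOf_forall_notMem hS (S.sortedBlock_subset k j),
          card_sortedBlock ((Nat.le_div_iff_mul_le hk).mp (mem_range.mp hj))]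
    _ = ENNReal.ofReal ((#S / k : ℕ) * (1 - k / #S) ^ m) := by
        rw [sum_const, card_range, nsmul_eq_mul, ← ENNReal.ofReal_natCast,
          ← ENNReal.ofReal_mul (by positivity)]
    _ ≤ _ := ENNReal.ofReal_le_ofReal <| natCast_mul_one_sub_div_pow_le hn hc hScard
        (Nat.le_ceil _) (Nat.div_mul_le_self _ _) (hm ▸ Nat.le_ceil _)
end
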